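/- For every dense G_δ set G ⊆ ω^ω × ω^ω there exists a slalom perfect set P ⊆ ω^ω such that P × P ⊆ G ∪ Δ, where Δ = {(x,x) : x ∈ ω^ω}. -/
import Mathlib


open Set

/-- `T` is a tree on `ℕ`: a set of finite sequences closed under initial segments. -/
def IsTree (T : Set (List ℕ)) : Prop := ∀ σ ∈ T, ∀ n : ℕ, σ.take n ∈ T

/-- The body of a tree: all infinite sequences all of whose initial segments lie in `T`. -/
def body (T : Set (List ℕ)) : Set (ℕ → ℕ) :=
  {x | ∀ n : ℕ, List.ofFn (fun i : Fin n => x i) ∈ T}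

/-- `σ` is a splitting node of `T`: it has at least two immediate successors in `T`. -/
def Splits (T : Set (List ℕ)) (σ : List ℕ) : Prop :=
  ∃ a b : ℕ, a ≠ b ∧ σ ++ [a] ∈ T ∧ σ ++ [b] ∈ T

/-- `T` is a perfect tree: a nonempty tree in which every node has a splitting
extension in `T`. -/
def IsPerfectTree (T : Set (List ℕ)) : Prop :=
  T.Nonempty ∧ IsTree T ∧ ∀ σ ∈ T, ∃ τ ∈ T, σ <+: τ ∧ Splits T τ

/-- `T` is a slalom tree: for every finite sequence `σ` there is an interval
`I = [k, k + |σ|)` of `ω` of length `|σ|` such that every `τ ∈ T` whose length exceeds all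
elements of `I` satisfies `τ ↾ I = σ`. -/
def IsSlalomTree (T : Set (List ℕ)) : Prop :=
  ∀ σ : List ℕ, ∃ k : ℕ, ∀ τ ∈ T, k + σ.length ≤ τ.length → (τ.drop k).take σ.length = σ

/-- `P` is a slalom perfect set: the body of a perfect slalom tree. -/
def IsSlalomPerfect (P : Set (ℕ → ℕ)) : Prop :=
  ∃ T : Set (List ℕ), IsPerfectTree T ∧ IsSlalomTree T ∧ P = body T

/-- The diagonal of the square of Baire space. -/
def diag : Set ((ℕ → ℕ) × (ℕ → ℕ)) := {p | p.1 = p.2}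

-- auxiliary machinery

namespace SlalomAux

/-- restriction of `x` to its first `n` values, as a list -/
def res (x : ℕ → ℕ) (n : ℕ) : List ℕ := List.ofFn fun i : Fin n => x i

@[simp] lemma res_length (x : ℕ → ℕ) (n : ℕ) : (res x n).length = n := by
  simp [res]

@[simp] lemma res_getElem (x : ℕ → ℕ) {n i : ℕ} (h : i < (res x n).length) :
    (res x n)[i] = x i := by
  simp [res]

lemma res_take (x : ℕ → ℕ) {m n : ℕ} (h : m ≤ n) : (res x n).take m = res x m := by
  apply List.ext_getElem
  · simp [h]
  · intro i h1 h2
    simp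

lemma res_prefix (x : ℕ → ℕ) {m n : ℕ} (h : m ≤ n) : res x m <+: res x n := by
  rw [← res_take x h]; exact List.take_prefix _ _

/-- basic clopen cylinder determined by a finite sequence -/
def cyl (s : List ℕ) : Set (ℕ → ℕ) := {x | res x s.length = s}

lemma mem_cyl_res (x : ℕ → ℕ) (n : ℕ) : x ∈ cyl (res x n) := by
  show res x (res x n).length = res x n
  rw [res_length]

lemma cyl_mono {s t : List ℕ} (h : s <+: t) : cyl t ⊆ cyl s := by
  intro x hx
  have hl : s.length ≤ t.length := h.length_le
  show res x s.length = s
  rw [← res_take x hl, hx]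
  exact (List.prefix_iff_eq_take.mp h).symm

lemma cyl_getElem {s : List ℕ} {x : ℕ → ℕ} (hx : x ∈ cyl s) {i : ℕ} (h : i < s.length) :
    x i = s[i] := by
  have hi : i < (res x s.length).length := by simpa using h
  have h2 := List.getElem_of_eq hx hi
  rw [← h2]
  simp

lemma cyl_isOpen (s : List ℕ) : IsOpen (cyl s) := by
  have : cyl s = ⋂ i : Fin s.length, {x : ℕ → ℕ | x (i : ℕ) = s[(i : ℕ)]} := by
    ext x
    simp only [cyl, mem_setOf_eq, mem_iInter]
    constructor
    · intro h i; exact cyl_getElem h i.isLt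
    · intro h
      apply List.ext_getElem (by simp)
      intro i h1 h2; simpa using h ⟨i, h2⟩
  rw [this]
  refine isOpen_iInter_of_finite fun i => ?_
  have he : {x : ℕ → ℕ | x (i : ℕ) = s[(i : ℕ)]}
      = (fun x : ℕ → ℕ => x (i : ℕ)) ⁻¹' {s[(i : ℕ)]} := rfl
  rw [he]
  exact IsOpen.preimage (continuous_apply (i : ℕ)) (isOpen_discrete _)

lemma cyl_nonempty (s : List ℕ) : (cyl s).Nonempty := by
  refine ⟨fun i => if h : i < s.length then s[i] else 0, ?_⟩
  apply List.ext_getElem (by simp)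
  intro i h1 h2
  simp [h2]

lemma exists_cyl_subset {A : Set (ℕ → ℕ)} (hA : IsOpen A) {x : ℕ → ℕ} (hx : x ∈ A) :
    ∃ m : ℕ, cyl (res x m) ⊆ A := by
  obtain ⟨I, u, hu, hsub⟩ := isOpen_pi_iff.mp hA x hx
  refine ⟨I.sup id + 1, fun y hy => hsub ?_⟩
  intro i hi
  have hilt : i < I.sup id + 1 := Nat.lt_succ_of_le (Finset.le_sup (f := id) hi)
  have : y i = x i := by
    have := cyl_getElem hy (i := i) (by simpa using hilt)
    simpa using this
  rw [this]
  exact (hu i hi).2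

lemma prefix_agree {u w : List ℕ} (h : u <+: w) {k l : ℕ} (hl : k + l ≤ u.length) :
    (u.drop k).take l = (w.drop k).take l := by
  have hlw := h.length_le
  apply List.ext_getElem
  · simp only [List.length_take, List.length_drop]
    omega
  · intro i h1 h2
    have hiu : k + i < u.length := by
      simp only [List.length_take, List.length_drop] at h1
      omega
    have hiw : k + i < w.length := lt_of_lt_of_le hiu h.length_le
    simp only [List.getElem_take, List.getElem_drop]
    exact h.getElem hiu

/-- key density step for one pair of nodes -/
lemma pair_ext {U : Set ((ℕ → ℕ) × (ℕ → ℕ))} (hU : IsOpen U) (hUd : Dense U)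
    (s t : List ℕ) :
    ∃ s' t' : List ℕ, s <+: s' ∧ t <+: t' ∧
      ∀ x y : ℕ → ℕ, x ∈ cyl s' → y ∈ cyl t' → (x, y) ∈ U := by
  have ho : IsOpen (cyl s ×ˢ cyl t) := (cyl_isOpen s).prod (cyl_isOpen t)
  have hne : (cyl s ×ˢ cyl t).Nonempty := (cyl_nonempty s).prod (cyl_nonempty t)
  obtain ⟨p, hpU, hps, hpt⟩ := hUd.exists_mem_open ho hne
  obtain ⟨x, y⟩ := p
  obtain ⟨A, B, hA, hB, hxA, hyB, hABU⟩ := isOpen_prod_iff.mp hU x y hpU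
  obtain ⟨m₁, hm₁⟩ := exists_cyl_subset hA hxA
  obtain ⟨m₂, hm₂⟩ := exists_cyl_subset hB hyB
  set m := max (max m₁ m₂) (max s.length t.length) with hm
  refine ⟨res x m, res y m, ?_, ?_, ?_⟩
  · have : s = res x s.length := hps.symm
    rw [this]; exact res_prefix x (by omega)
  · have : t = res y t.length := hpt.symm
    rw [this]; exact res_prefix y (by omega)
  · intro a b ha hb
    have haA : a ∈ A := hm₁ (cyl_mono (res_prefix x (by omega : m₁ ≤ m)) ha)
    have hbB : b ∈ B := hm₂ (cyl_mono (res_prefix y (by omega : m₂ ≤ m)) hb)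
    exact hABU ⟨haA, hbB⟩

/-- extend a finite family of nodes handling a list of pairs against a dense open set -/
lemma extend_family {ι : Type} [DecidableEq ι]
    {U : Set ((ℕ → ℕ) × (ℕ → ℕ))} (hU : IsOpen U) (hUd : Dense U)
    (ps : List (ι × ι)) (f : ι → List ℕ) :
    ∃ g : ι → List ℕ, (∀ i, f i <+: g i) ∧
      ∀ p ∈ ps, p.1 ≠ p.2 →
        ∀ x y : ℕ → ℕ, x ∈ cyl (g p.1) → y ∈ cyl (g p.2) → (x, y) ∈ U := by
  induction ps with
  | nil => exact ⟨f, fun i => List.prefix_refl _, by simp⟩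
  | cons p rest ih =>
    obtain ⟨g, hg, hgood⟩ := ih
    by_cases hpq : p.1 = p.2
    · refine ⟨g, hg, ?_⟩
      intro q hq hne
      rcases List.mem_cons.mp hq with h | h
      · exact absurd (h ▸ hpq) hne
      · exact hgood q h hne
    · obtain ⟨s', t', hs', ht', hbox⟩ := pair_ext hU hUd (g p.1) (g p.2)
      set g' : ι → List ℕ := Function.update (Function.update g p.1 s') p.2 t' with hg'
      have hgp1 : g' p.1 = s' := by
        rw [hg', Function.update_of_ne hpq, Function.update_self]
      have hgp2 : g' p.2 = t' := by
        rw [hg', Function.update_self]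
      have hext : ∀ i, g i <+: g' i := by
        intro i
        by_cases h2 : i = p.2
        · subst h2; rw [hgp2]; exact ht'
        by_cases h1 : i = p.1
        · subst h1; rw [hgp1]; exact hs'
        · rw [hg', Function.update_of_ne h2, Function.update_of_ne h1]
      refine ⟨g', fun i => (hg i).trans (hext i), ?_⟩
      intro q hq hne
      rcases List.mem_cons.mp hq with h | h
      · subst h
        intro x y hx hy
        rw [hgp1] at hx; rw [hgp2] at hy
        exact hbox x y hx hy
      · intro x y hx hy
        exact hgood q h hne x y (cyl_mono (hext q.1) hx) (cyl_mono (hext q.2) hy)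

def bit (b : Bool) : ℕ := if b then 1 else 0

/-- stage data: a level of the fusion construction -/
structure SD (n : ℕ) where
  E : (Fin n → Bool) → List ℕ
  L : ℕ
  len : ∀ b, (E b).length = L
  inj : Function.Injective E

lemma step_exists {U : Set ((ℕ → ℕ) × (ℕ → ℕ))} (hU : IsOpen U) (hUd : Dense U)
    {n : ℕ} (D : SD n) (σ : List ℕ) :
    ∃ D' : SD (n+1),
      (∀ b : Fin (n+1) → Bool,
        D.E (b ∘ Fin.castSucc) ++ [bit (b (Fin.last n))] <+: D'.E b) ∧
      (∀ b, ((D'.E b).drop (D.L+1)).take σ.length = σ) ∧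
      (D.L + 1 + σ.length ≤ D'.L) ∧
      (∀ b b', b ≠ b' → ∀ x y : ℕ → ℕ,
        x ∈ cyl (D'.E b) → y ∈ cyl (D'.E b') → (x, y) ∈ U) := by
  classical
  set E₁ : (Fin (n+1) → Bool) → List ℕ :=
    fun b => D.E (b ∘ Fin.castSucc) ++ [bit (b (Fin.last n))] ++ σ with hE₁
  have hE₁len : ∀ b, (E₁ b).length = D.L + 1 + σ.length := by
    intro b; simp [hE₁, D.len]; omega
  have hE₁inj : Function.Injective E₁ := by
    intro b b' h
    simp only [hE₁] at h
    have hl1 : (D.E (b ∘ Fin.castSucc) ++ [bit (b (Fin.last n))]).length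
        = (D.E (b' ∘ Fin.castSucc) ++ [bit (b' (Fin.last n))]).length := by
      simp [D.len]
    obtain ⟨h1, -⟩ := List.append_inj h (by simpa using hl1)
    have hl2 : (D.E (b ∘ Fin.castSucc)).length = (D.E (b' ∘ Fin.castSucc)).length := by
      simp [D.len]
    obtain ⟨h2, h3⟩ := List.append_inj h1 hl2
    have hcast : b ∘ Fin.castSucc = b' ∘ Fin.castSucc := D.inj h2
    have hlast : b (Fin.last n) = b' (Fin.last n) := by
      cases hb : b (Fin.last n) <;> cases hb' : b' (Fin.last n) <;>
        simp [hb, hb', bit] at h3 ⊢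
    funext i
    refine Fin.lastCases ?_ ?_ i
    · exact hlast
    · intro j; exact congrFun hcast j
  obtain ⟨g, hgext, hgood⟩ := extend_family hU hUd
    (Finset.univ : Finset ((Fin (n+1) → Bool) × (Fin (n+1) → Bool))).toList E₁
  set L' : ℕ := Finset.univ.sup fun b : Fin (n+1) → Bool => (g b).length with hL'
  have hgle : ∀ b, (g b).length ≤ L' := fun b => Finset.le_sup (f := fun b => (g b).length) (Finset.mem_univ b)
  set E' : (Fin (n+1) → Bool) → List ℕ :=
    fun b => g b ++ List.replicate (L' - (g b).length) 0 with hE'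
  have hE'len : ∀ b, (E' b).length = L' := by
    intro b; simp only [hE', List.length_append, List.length_replicate]
    have := hgle b; omega
  have hgE' : ∀ b, g b <+: E' b := fun b => List.prefix_append _ _
  have hE₁E' : ∀ b, E₁ b <+: E' b := fun b => (hgext b).trans (hgE' b)
  have hLle : D.L + 1 + σ.length ≤ L' := by
    have h1 := (hE₁E' (fun _ => false)).length_le
    rw [hE₁len, hE'len] at h1; exact h1
  have hE'inj : Function.Injective E' := by
    intro b b' h
    apply hE₁inj
    have hb : E₁ b = (E' b).take (D.L + 1 + σ.length) := by
      rw [← hE₁len b]; exact List.prefix_iff_eq_take.mp (hE₁E' b)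
    have hb' : E₁ b' = (E' b').take (D.L + 1 + σ.length) := by
      rw [← hE₁len b']; exact List.prefix_iff_eq_take.mp (hE₁E' b')
    rw [hb, hb', h]
  refine ⟨⟨E', L', hE'len, hE'inj⟩, ?_, ?_, hLle, ?_⟩
  · intro b
    exact (List.prefix_append _ σ).trans (hE₁E' b)
  · intro b
    have hag := prefix_agree (hE₁E' b) (k := D.L + 1) (l := σ.length)
      (by rw [hE₁len])
    rw [← hag]
    have hdl : (D.E (b ∘ Fin.castSucc) ++ [bit (b (Fin.last n))]).length = D.L + 1 := by
      simp [D.len]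
    show ((((D.E (b ∘ Fin.castSucc) ++ [bit (b (Fin.last n))]) ++ σ).drop (D.L+1)).take
        σ.length) = σ
    rw [← hdl, List.drop_left, List.take_length]
  · intro b b' hne x y hx hy
    exact hgood (b, b') (by simp [Finset.mem_toList]) hne x y
      (cyl_mono (hgE' b) hx) (cyl_mono (hgE' b') hy)

section Stage

variable (V : ℕ → Set ((ℕ → ℕ) × (ℕ → ℕ))) (hVo : ∀ n, IsOpen (V n)) (hVd : ∀ n, Dense (V n))

noncomputable def stage : ∀ n, SD n :=
  Nat.rec
    ⟨fun _ => [], 0, fun _ => rfl, fun b b' _ => funext fun i => i.elim0⟩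
    (fun n D => (step_exists (hVo n) (hVd n) D (Denumerable.ofNat (List ℕ) n)).choose)

lemma stage_spec (n : ℕ) :
    (∀ b : Fin (n+1) → Bool,
      (stage V hVo hVd n).E (b ∘ Fin.castSucc) ++ [bit (b (Fin.last n))]
        <+: (stage V hVo hVd (n+1)).E b) ∧
    (∀ b, (((stage V hVo hVd (n+1)).E b).drop ((stage V hVo hVd n).L + 1)).take
        (Denumerable.ofNat (List ℕ) n).length = Denumerable.ofNat (List ℕ) n) ∧
    ((stage V hVo hVd n).L + 1 + (Denumerable.ofNat (List ℕ) n).length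
        ≤ (stage V hVo hVd (n+1)).L) ∧
    (∀ b b', b ≠ b' → ∀ x y : ℕ → ℕ,
      x ∈ cyl ((stage V hVo hVd (n+1)).E b) → y ∈ cyl ((stage V hVo hVd (n+1)).E b') →
      (x, y) ∈ V n) :=
  (step_exists (hVo n) (hVd n) (stage V hVo hVd n) (Denumerable.ofNat (List ℕ) n)).choose_spec

lemma stage_prefix_succ (n : ℕ) (b : Fin (n+1) → Bool) :
    (stage V hVo hVd n).E (b ∘ Fin.castSucc) <+: (stage V hVo hVd (n+1)).E b :=
  (List.prefix_append _ _).trans ((stage_spec V hVo hVd n).1 b)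

lemma stage_prefix {m n : ℕ} (h : m ≤ n) (b : Fin n → Bool) :
    (stage V hVo hVd m).E (fun i => b (Fin.castLE h i)) <+: (stage V hVo hVd n).E b := by
  induction n with
  | zero =>
    have hm : m = 0 := Nat.le_zero.mp h
    subst hm
    have : (fun i => b (Fin.castLE h i)) = b := funext fun i => congrArg b (Fin.ext rfl)
    rw [this]
  | succ n ih =>
    rcases Nat.lt_succ_iff_lt_or_eq.mp (Nat.lt_succ_of_le h) with h' | h'
    · have hmn : m ≤ n := Nat.lt_succ_iff.mp h'
      have h1 := ih hmn (b := b ∘ Fin.castSucc)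
      have heq : (fun i => (b ∘ Fin.castSucc) (Fin.castLE hmn i))
          = (fun i => b (Fin.castLE h i)) := funext fun i => congrArg b (Fin.ext rfl)
      rw [heq] at h1
      exact h1.trans (stage_prefix_succ V hVo hVd n (b := b))
    · subst h'
      have : (fun i => b (Fin.castLE h i)) = b := funext fun i => congrArg b (Fin.ext rfl)
      rw [this]

lemma stage_L_lt (n : ℕ) : (stage V hVo hVd n).L < (stage V hVo hVd (n+1)).L := by
  have := (stage_spec V hVo hVd n).2.2.1
  omega

lemma stage_L_ge (n : ℕ) : n ≤ (stage V hVo hVd n).L := by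
  induction n with
  | zero => exact Nat.zero_le _
  | succ n ih => exact Nat.lt_of_le_of_lt ih (stage_L_lt V hVo hVd n)

/-- the fusion tree -/
def tree : Set (List ℕ) := {τ | ∃ n b, τ <+: (stage V hVo hVd n).E b}

lemma big_stage {τ : List ℕ} (hτ : τ ∈ tree V hVo hVd) (M : ℕ) :
    ∃ m, M ≤ m ∧ ∃ b, τ <+: (stage V hVo hVd m).E b := by
  obtain ⟨m₀, b₀, h⟩ := hτ
  refine ⟨max m₀ M, le_max_right _ _, ?_⟩
  have hm : m₀ ≤ max m₀ M := le_max_left _ _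
  set b : Fin (max m₀ M) → Bool := fun i => if h : (i : ℕ) < m₀ then b₀ ⟨i, h⟩ else false
    with hb
  refine ⟨b, h.trans ?_⟩
  have heq : (fun i => b (Fin.castLE hm i)) = b₀ := by
    funext i
    simp only [hb, Fin.castLE]
    rw [dif_pos i.isLt]
  have := stage_prefix V hVo hVd hm b
  rwa [heq] at this

lemma node_of_len {τ : List ℕ} (hτ : τ ∈ tree V hVo hVd) {n : ℕ}
    (hlen : τ.length = (stage V hVo hVd n).L) :
    ∃ b, τ = (stage V hVo hVd n).E b := by
  obtain ⟨m, hm, c, hc⟩ := big_stage V hVo hVd hτ n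
  refine ⟨fun i => c (Fin.castLE hm i), ?_⟩
  have hu := stage_prefix V hVo hVd hm c
  have h1 : τ = ((stage V hVo hVd m).E c).take τ.length :=
    List.prefix_iff_eq_take.mp hc
  have h2 : (stage V hVo hVd n).E (fun i => c (Fin.castLE hm i))
      = ((stage V hVo hVd m).E c).take τ.length := by
    rw [hlen, ← (stage V hVo hVd n).len (fun i => c (Fin.castLE hm i))]
    exact List.prefix_iff_eq_take.mp hu
  rw [h1, h2]

lemma tree_spec : ∀ τ ∈ tree V hVo hVd, ∀ n : ℕ, τ.take n ∈ tree V hVo hVd := by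
  rintro τ ⟨m, b, h⟩ n
  exact ⟨m, b, (List.take_prefix n τ).trans h⟩

lemma tree_nonempty : ([] : List ℕ) ∈ tree V hVo hVd :=
  ⟨0, fun _ => false, List.nil_prefix⟩

lemma tree_split (n : ℕ) (b : Fin n → Bool) (c : Bool) :
    (stage V hVo hVd n).E b ++ [bit c] ∈ tree V hVo hVd := by
  refine ⟨n + 1, Fin.snoc b c, ?_⟩
  have hcomp : (Fin.snoc b c : Fin (n+1) → Bool) ∘ Fin.castSucc = b :=
    funext fun i => Fin.snoc_castSucc _ _ _
  have hlast : (Fin.snoc b c : Fin (n+1) → Bool) (Fin.last n) = c := Fin.snoc_last _ _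
  have := (stage_spec V hVo hVd n).1 (Fin.snoc b c)
  rwa [hcomp, hlast] at this

end Stage

end SlalomAux

open SlalomAux


/-- For every dense `Gδ` set `G ⊆ ω^ω × ω^ω` there is a slalom perfect set `P ⊆ ω^ω` with
`P × P ⊆ G ∪ Δ`. -/
theorem denseGdelta_contains_slalomPerfect_square
    (G : Set ((ℕ → ℕ) × (ℕ → ℕ))) (hGδ : IsGδ G) (hGd : Dense G) :
    ∃ P : Set (ℕ → ℕ), IsSlalomPerfect P ∧ P ×ˢ P ⊆ G ∪ diag := by
  classical
  obtain ⟨f, hfo, hfG⟩ := isGδ_iff_eq_iInter_nat.mp hGδ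
  have hfd : ∀ n, Dense (f n) := fun n => hGd.mono (by rw [hfG]; exact iInter_subset f n)
  set V : ℕ → Set ((ℕ → ℕ) × (ℕ → ℕ)) :=
    fun n => Nat.rec (f 0) (fun k S => S ∩ f (k+1)) n with hV
  have hVsucc : ∀ n, V (n+1) = V n ∩ f (n+1) := fun n => rfl
  have hVo : ∀ n, IsOpen (V n) := by
    intro n
    induction n with
    | zero => exact hfo 0
    | succ n ih => rw [hVsucc]; exact ih.inter (hfo (n+1))
  have hVd : ∀ n, Dense (V n) := by
    intro n
    induction n with
    | zero => exact hfd 0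
    | succ n ih => rw [hVsucc]; exact ih.inter_of_isOpen_left (hfd (n+1)) (hVo n)
  have hVsub : ∀ k n, k ≤ n → V n ⊆ f k := by
    intro k n
    induction n with
    | zero =>
      intro hk
      have : k = 0 := Nat.le_zero.mp hk
      subst this
      exact subset_rfl
    | succ n ih =>
      intro hk
      rcases Nat.lt_succ_iff_lt_or_eq.mp (Nat.lt_succ_of_le hk) with h | h
      · rw [hVsucc]
        exact subset_trans inter_subset_left (ih (Nat.lt_succ_iff.mp h))
      · subst h
        rw [hVsucc]
        exact inter_subset_right
  set T := tree V hVo hVd with hT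
  refine ⟨body T, ⟨T, ⟨⟨[], tree_nonempty V hVo hVd⟩, tree_spec V hVo hVd, ?_⟩, ?_, rfl⟩, ?_⟩
  · -- perfectness
    rintro σ ⟨n, b, h⟩
    refine ⟨(stage V hVo hVd n).E b, ⟨n, b, List.prefix_refl _⟩, h, 0, 1, by norm_num,
      ?_, ?_⟩
    · have := tree_split V hVo hVd n b false
      simpa [bit] using this
    · have := tree_split V hVo hVd n b true
      simpa [bit] using this
  · -- slalom
    intro σ
    have hn : Denumerable.ofNat (List ℕ) (Encodable.encode σ) = σ :=
      Denumerable.ofNat_encode σ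
    set n := Encodable.encode σ with hnn
    refine ⟨(stage V hVo hVd n).L + 1, ?_⟩
    intro τ hτ hlen
    obtain ⟨m, hm, c, hc⟩ := big_stage V hVo hVd hτ (n+1)
    set u := (stage V hVo hVd (n+1)).E (fun i => c (Fin.castLE hm i)) with hu
    have huw : u <+: (stage V hVo hVd m).E c := stage_prefix V hVo hVd hm c
    have hslal := (stage_spec V hVo hVd n).2.1 (fun i => c (Fin.castLE hm i))
    rw [hn] at hslal
    have hle := (stage_spec V hVo hVd n).2.2.1
    rw [hn] at hle
    have hul : (stage V hVo hVd n).L + 1 + σ.length ≤ u.length := by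
      rw [hu, (stage V hVo hVd (n+1)).len]; omega
    calc (τ.drop ((stage V hVo hVd n).L + 1)).take σ.length
        = (((stage V hVo hVd m).E c).drop ((stage V hVo hVd n).L + 1)).take σ.length :=
          prefix_agree hc hlen
      _ = (u.drop ((stage V hVo hVd n).L + 1)).take σ.length :=
          (prefix_agree huw hul).symm
      _ = σ := hslal
  · -- square subset
    rintro ⟨x, y⟩ ⟨hx, hy⟩
    by_cases hxy : x = y
    · exact Or.inr hxy
    left
    rw [hfG, mem_iInter]
    intro k
    obtain ⟨d, hd⟩ := Function.ne_iff.mp hxy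
    set n := max k d with hnn
    have hdlt : d < (stage V hVo hVd (n+1)).L :=
      lt_of_lt_of_le (by omega) (stage_L_ge V hVo hVd (n+1))
    have hxT : res x ((stage V hVo hVd (n+1)).L) ∈ T := hx _
    have hyT : res y ((stage V hVo hVd (n+1)).L) ∈ T := hy _
    obtain ⟨b1, hb1⟩ := node_of_len V hVo hVd (n := n+1) hxT (by simp)
    obtain ⟨b2, hb2⟩ := node_of_len V hVo hVd (n := n+1) hyT (by simp)
    have hne : b1 ≠ b2 := by
      intro h
      apply hd
      have heq : res x ((stage V hVo hVd (n+1)).L) = res y ((stage V hVo hVd (n+1)).L) := by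
        rw [hb1, h, ← hb2]
      have h1 := List.getElem_of_eq heq (by simpa using hdlt)
      simpa using h1
    have hx' : x ∈ cyl ((stage V hVo hVd (n+1)).E b1) := by
      show res x ((stage V hVo hVd (n+1)).E b1).length = (stage V hVo hVd (n+1)).E b1
      rw [(stage V hVo hVd (n+1)).len b1]
      exact hb1
    have hy' : y ∈ cyl ((stage V hVo hVd (n+1)).E b2) := by
      show res y ((stage V hVo hVd (n+1)).E b2).length = (stage V hVo hVd (n+1)).E b2
      rw [(stage V hVo hVd (n+1)).len b2]
      exact hb2
    have hbox := (stage_spec V hVo hVd n).2.2.2 b1 b2 hne x y hx' hy'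
    exact hVsub k n (le_max_left _ _) hbox
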